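/- arXiv:2603.01531 — 2 statements merged into one kernel-verified Lean document; each statement's English description precedes it below -/
import Mathlib

section
/- Cancellation of backtracking: for any path map α : I_n → G on a digraph G and all 1-forms ω_1,...,ω_r with r ≥ 1, the iterated integral along the concatenation of α with its inverse vanishes: ∫_{α⋆α^{-1}} ω_1···ω_r = 0. -/
open Finset

attribute [local instance] Classical.propDecidable

/-- A digraph: vertex type `V`, arrow relation without self-loops. -/
structure Digraph' (V : Type*) where
  Arrow : V → V → Prop
  irrefl : ∀ v, ¬ Arrow v v

/-- A step of a path map: an arrow `a → b` traversed forward, an arrow `a → b`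
traversed backward (from `b` to `a`), or a trivial arrow at a vertex. -/
inductive PStep (V : Type*) where
  | fwd : V → V → PStep V
  | bwd : V → V → PStep V
  | triv : V → PStep V

namespace PStep
variable {V : Type*}

def src : PStep V → V
  | fwd a _ => a
  | bwd _ b => b
  | triv a => a

def tgt : PStep V → V
  | fwd _ b => b
  | bwd a _ => a
  | triv a => a

/-- The step uses an actual arrow of `G` (or is trivial). -/
def ok (G : Digraph' V) : PStep V → Prop
  | fwd a b => G.Arrow a b
  | bwd a b => G.Arrow a b
  | triv _ => True

/-- The inverse step. -/
def inv : PStep V → PStep V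
  | fwd a b => bwd a b
  | bwd a b => fwd a b
  | triv a => triv a

/-- Pairing `⟨ω, s⟩` of a 1-form with a step: `ω(a)` forward, `-ω(a)` backward,
`0` on trivial arrows. -/
def pair {K : Type*} [Field K] (ω : V → V → K) : PStep V → K
  | fwd a b => ω a b
  | bwd a b => - ω a b
  | triv _ => 0

end PStep

/-- `σ 1, …, σ n` are the steps of a path map `I_n → G`. -/
def IsPathMap {V : Type*} (G : Digraph' V) (n : ℕ) (σ : ℕ → PStep V) : Prop :=
  (∀ t, 1 ≤ t → t ≤ n → (σ t).ok G) ∧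
  (∀ t, 1 ≤ t → t < n → (σ t).tgt = (σ (t + 1)).src)

/-- Volume number of a finite sequence: product of factorials of multiplicities. -/
def volFin {r : ℕ} (g : Fin r → ℕ) : ℕ :=
  ∏ k ∈ Finset.image g Finset.univ,
    Nat.factorial ((Finset.univ.filter (fun j => g j = k)).card)

/-- The iterated integral `∫_α ω_1 ⋯ ω_r` along a path map of length `n`
with steps `σ 1, …, σ n`. -/
noncomputable def iint (K : Type*) [Field K] {V : Type*} (n : ℕ) (σ : ℕ → PStep V)
    (r : ℕ) (ω : Fin r → V → V → K) : K :=
  ∑ f ∈ Finset.univ.filter (fun f : Fin r → Fin n => Monotone f),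
    (∏ i, PStep.pair (ω i) (σ ((f i : ℕ) + 1))) / (volFin (fun i => (f i : ℕ)) : K)

/-- Concatenation of step sequences: the first `n` steps from `σ`, then steps of `τ`. -/
def concatP {V : Type*} (n : ℕ) (σ τ : ℕ → PStep V) : ℕ → PStep V :=
  fun t => if t ≤ n then σ t else τ (t - n)

/-- The inverse path map of a path map of length `n`. -/
def invP {V : Type*} (n : ℕ) (σ : ℕ → PStep V) : ℕ → PStep V :=
  fun t => (σ (n + 1 - t)).inv

/-- Multiplicity of the value `k` in the (1-indexed) sequence `t 1, …, t r`. -/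
def multN (t : ℕ → ℕ) (r k : ℕ) : ℕ := ((Finset.Icc 1 r).filter (fun j => t j = k)).card

/-- Volume number of the sequence `t 1, …, t r`: the product over all `k` of
the factorial of the multiplicity of `k`. -/
noncomputable def volN (t : ℕ → ℕ) (r : ℕ) : ℕ := ∏ᶠ k, Nat.factorial (multN t r k)



lemma pair_inv' {V K : Type*} [Field K] (ω : V → V → K) (p : PStep V) :
    PStep.pair ω p.inv = - PStep.pair ω p := by
  cases p <;> simp [PStep.pair, PStep.inv]

lemma concat_inv_reflect {V : Type*} (n : ℕ) (σ : ℕ → PStep V) (s : ℕ) (h1 : 1 ≤ s) (h2 : s ≤ n) :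
    concatP n σ (invP n σ) (2*n + 1 - s) = (concatP n σ (invP n σ) s).inv := by
  unfold concatP invP
  rw [if_pos h2, if_neg (by omega)]
  have e : n + 1 - (2*n+1-s - n) = s := by omega
  rw [e]

lemma mono_le_iff {r N : ℕ} {f : Fin r → Fin N} (hf : Monotone f) (i : Fin r) (v : Fin N) :
    f i ≤ v ↔ (i : ℕ) < (univ.filter (fun j => f j ≤ v)).card := by
  constructor
  · intro h
    have hsub : Finset.Iic i ⊆ univ.filter (fun j => f j ≤ v) := by
      intro j hj
      simp only [Finset.mem_Iic] at hj
      simp only [Finset.mem_filter, Finset.mem_univ, true_and]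
      exact le_trans (hf hj) h
    have := Finset.card_le_card hsub
    rw [Fin.card_Iic] at this
    omega
  · intro h
    by_contra hc
    have hsub : univ.filter (fun j => f j ≤ v) ⊆ Finset.Iio i := by
      intro j hj
      simp only [Finset.mem_filter, Finset.mem_univ, true_and] at hj
      simp only [Finset.mem_Iio]
      by_contra hji
      push_neg at hji
      exact hc (le_trans (hf hji) hj)
    have := Finset.card_le_card hsub
    rw [Fin.card_Iio] at this
    omega

lemma mono_eq_of_counts {r N : ℕ} {f g : Fin r → Fin N} (hf : Monotone f) (hg : Monotone g)
    (h : ∀ v : Fin N, (univ.filter (fun j => f j = v)).card = (univ.filter (fun j => g j = v)).card) :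
    f = g := by
  have key : ∀ (f : Fin r → Fin N) (v : Fin N), (univ.filter (fun j => f j ≤ v)).card
      = ∑ w ∈ Finset.Iic v, (univ.filter (fun j => f j = w)).card := by
    intro f v
    rw [← Finset.card_biUnion]
    · congr 1
      ext j
      simp only [Finset.mem_filter, Finset.mem_univ, true_and, Finset.mem_biUnion, Finset.mem_Iic]
      constructor
      · intro hj; exact ⟨f j, hj, rfl⟩
      · rintro ⟨w, hw, rfl⟩; exact hw
    · intro a _ b _ hab
      simp only [Finset.disjoint_left, Finset.mem_filter, Finset.mem_univ, true_and]
      rintro j h1 h2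
      exact hab (h1 ▸ h2 ▸ rfl)
  have hle : ∀ v, (univ.filter (fun j => f j ≤ v)).card = (univ.filter (fun j => g j ≤ v)).card := by
    intro v; rw [key, key]; exact Finset.sum_congr rfl fun w _ => h w
  funext i
  apply le_antisymm
  · rw [mono_le_iff hf, hle]; exact (mono_le_iff hg i (g i)).mp le_rfl
  · rw [mono_le_iff hg, ← hle]; exact (mono_le_iff hf i (f i)).mp le_rfl

def smax {r N : ℕ} (f : Fin r → Fin N) : ℕ :=
  univ.sup fun i => min ((f i : ℕ) + 1) (N - (f i : ℕ))

def downP {r N : ℕ} (f : Fin r → Fin N) (i : Fin r) : Fin N :=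
  if h : (f i : ℕ) = N - smax f ∧ smax f - 1 < N then ⟨smax f - 1, h.2⟩ else f i

def lowct {r N : ℕ} (g : Fin r → Fin N) (i : Fin r) : ℕ :=
  (univ.filter fun j => i ≤ j ∧ (g j : ℕ) = smax g - 1).card

def liftP {r N : ℕ} (g : Fin r → Fin N) (k : ℕ) (i : Fin r) : Fin N :=
  if h : (g i : ℕ) = smax g - 1 ∧ lowct g i ≤ k ∧ N - smax g < N then ⟨N - smax g, h.2.2⟩ else g i

def mct {r N : ℕ} (g : Fin r → Fin N) : ℕ :=
  (univ.filter fun j => (g j : ℕ) = smax g - 1).card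

def countv {r N : ℕ} (f : Fin r → Fin N) (v : ℕ) : ℕ :=
  (univ.filter fun i => (f i : ℕ) = v).card

section Basic
variable {r n : ℕ}

lemma smax_pos (f : Fin r → Fin (2*n)) (hr : 0 < r) : 1 ≤ smax f := by
  have i : Fin r := ⟨0, hr⟩
  have h1 : min ((f i : ℕ) + 1) (2*n - (f i : ℕ)) ≤ smax f :=
    Finset.le_sup (f := fun i => min ((f i : ℕ) + 1) (2*n - (f i : ℕ))) (Finset.mem_univ i)
  have h2 := (f i).isLt
  omega

lemma smax_le_n (f : Fin r → Fin (2*n)) : smax f ≤ n := by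
  apply Finset.sup_le
  intro i _
  have := (f i).isLt
  omega

lemma uval_le (f : Fin r → Fin (2*n)) (i : Fin r) :
    min ((f i : ℕ) + 1) (2*n - (f i : ℕ)) ≤ smax f :=
  Finset.le_sup (f := fun i => min ((f i : ℕ) + 1) (2*n - (f i : ℕ))) (Finset.mem_univ i)

lemma exists_attain (f : Fin r → Fin (2*n)) (hr : 0 < r) :
    ∃ i, min ((f i : ℕ) + 1) (2*n - (f i : ℕ)) = smax f := by
  obtain ⟨i, _, h⟩ := Finset.exists_mem_eq_sup (univ : Finset (Fin r))
    ⟨⟨0, hr⟩, Finset.mem_univ _⟩ (fun i => min ((f i : ℕ) + 1) (2*n - (f i : ℕ)))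
  exact ⟨i, h.symm⟩

lemma uval_cases {N s v : ℕ} (hv : v < N) (h : min (v+1) (N - v) ≤ s) :
    v + 1 ≤ s ∨ N - s ≤ v := by
  rcases le_total (v+1) (N - v) with h' | h'
  · rw [min_eq_left h'] at h; omega
  · rw [min_eq_right h'] at h; omega

lemma uval_eq_cases {N s v : ℕ} (hv : v < N) (h : min (v+1) (N - v) = s) :
    v = s - 1 ∨ v = N - s := by
  rcases le_total (v+1) (N - v) with h' | h'
  · rw [min_eq_left h'] at h; omega
  · rw [min_eq_right h'] at h; omega

lemma uval_low {N s : ℕ} (h1 : 1 ≤ s) (h2 : 2*s ≤ N) : min ((s-1)+1) (N - (s-1)) = s := by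
  rw [min_eq_left (by omega)]; omega

lemma uval_high {N s : ℕ} (h1 : 1 ≤ s) (h2 : 2*s ≤ N) : min ((N-s)+1) (N - (N-s)) = s := by
  rw [min_eq_right (by omega)]; omega

end Basic

section DownLift
variable {r n : ℕ}

lemma down_apply (f : Fin r → Fin (2*n)) (hn : 0 < n) (i : Fin r) :
    (downP f i : ℕ) = if (f i : ℕ) = 2*n - smax f then smax f - 1 else (f i : ℕ) := by
  have h2 := smax_le_n f
  unfold downP
  by_cases hc : (f i : ℕ) = 2*n - smax f
  · rw [dif_pos ⟨hc, by omega⟩, if_pos hc]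
  · rw [dif_neg (fun h => hc h.1), if_neg hc]

lemma smax_down (f : Fin r → Fin (2*n)) (hn : 0 < n) (hr : 0 < r) :
    smax (downP f) = smax f := by
  have h1 := smax_pos f hr
  have h2 := smax_le_n f
  unfold smax
  apply Finset.sup_congr rfl
  intro i _
  rw [down_apply f hn i]
  by_cases hc : (f i : ℕ) = 2*n - smax f
  · rw [if_pos hc, hc, uval_low h1 (by omega), uval_high h1 (by omega)]
  · rw [if_neg hc]

lemma down_mono (f : Fin r → Fin (2*n)) (hn : 0 < n) (hr : 0 < r) (hf : Monotone f) :
    Monotone (downP f) := by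
  intro i j hij
  have h1 := smax_pos f hr
  have h2 := smax_le_n f
  have di := down_apply f hn i
  have dj := down_apply f hn j
  have hfi := (f i).isLt
  have hfj := (f j).isLt
  have hmono : (f i : ℕ) ≤ f j := hf hij
  have hci := uval_cases hfi (uval_le f i)
  have hcj := uval_cases hfj (uval_le f j)
  rw [Fin.le_def, di, dj]
  split_ifs with hi hj hj <;> omega

lemma down_ne_high (f : Fin r → Fin (2*n)) (hn : 0 < n) (hr : 0 < r) (i : Fin r) :
    (downP f i : ℕ) ≠ 2*n - smax (downP f) := by
  rw [smax_down f hn hr, down_apply f hn i]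
  have h1 := smax_pos f hr
  have h2 := smax_le_n f
  split_ifs with hc <;> omega

lemma mct_pos (g : Fin r → Fin (2*n)) (hr : 0 < r)
    (hnh : ∀ i, (g i : ℕ) ≠ 2*n - smax g) : 1 ≤ mct g := by
  obtain ⟨i, hi⟩ := exists_attain g hr
  rcases uval_eq_cases (g i).isLt hi with h | h
  · refine Finset.card_pos.mpr ⟨i, ?_⟩
    simp only [Finset.mem_filter, Finset.mem_univ, true_and]
    exact h
  · exact absurd h (hnh i)

lemma lowct_antitone (g : Fin r → Fin (2*n)) {i j : Fin r} (hij : i ≤ j) :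
    lowct g j ≤ lowct g i := by
  apply Finset.card_le_card
  intro x hx
  simp only [Finset.mem_filter, Finset.mem_univ, true_and] at hx ⊢
  exact ⟨le_trans hij hx.1, hx.2⟩

lemma lowct_strict (g : Fin r → Fin (2*n)) {i j : Fin r} (hij : i < j)
    (hi : (g i : ℕ) = smax g - 1) : lowct g j < lowct g i := by
  have hins : insert i (univ.filter fun x => j ≤ x ∧ (g x : ℕ) = smax g - 1)
      ⊆ univ.filter fun x => i ≤ x ∧ (g x : ℕ) = smax g - 1 := by
    intro x hx
    rcases Finset.mem_insert.mp hx with rfl | hx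
    · simp only [Finset.mem_filter, Finset.mem_univ, true_and]
      exact ⟨le_refl _, hi⟩
    · simp only [Finset.mem_filter, Finset.mem_univ, true_and] at hx ⊢
      exact ⟨le_trans (le_of_lt hij) hx.1, hx.2⟩
  have hnotmem : i ∉ (univ.filter fun x => j ≤ x ∧ (g x : ℕ) = smax g - 1) := by
    simp only [Finset.mem_filter, Finset.mem_univ, true_and]
    exact fun h => absurd (lt_of_lt_of_le hij h.1) (lt_irrefl i)
  have := Finset.card_le_card hins
  rw [Finset.card_insert_of_notMem hnotmem] at this
  unfold lowct
  omega

lemma lowct_pos (g : Fin r → Fin (2*n)) {i : Fin r} (hi : (g i : ℕ) = smax g - 1) :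
    1 ≤ lowct g i := by
  refine Finset.card_pos.mpr ⟨i, ?_⟩
  simp only [Finset.mem_filter, Finset.mem_univ, true_and]
  exact ⟨le_refl _, hi⟩

lemma lowct_le_m (g : Fin r → Fin (2*n)) (i : Fin r) : lowct g i ≤ mct g := by
  apply Finset.card_le_card
  intro x hx
  simp only [Finset.mem_filter, Finset.mem_univ, true_and] at hx ⊢
  exact hx.2

lemma card_Sk (g : Fin r → Fin (2*n)) (k : ℕ) (hk : k ≤ mct g) :
    (univ.filter fun i => (g i : ℕ) = smax g - 1 ∧ lowct g i ≤ k).card = k := by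
  set B := univ.filter fun j : Fin r => (g j : ℕ) = smax g - 1 with hB
  have hinj : Set.InjOn (lowct g) ↑B := by
    intro a ha b hb hab
    rcases lt_trichotomy a b with h | h | h
    · have := lowct_strict g h (Finset.mem_filter.mp (Finset.mem_coe.mp ha)).2
      omega
    · exact h
    · have := lowct_strict g h (Finset.mem_filter.mp (Finset.mem_coe.mp hb)).2
      omega
  have himg : Finset.image (lowct g) B = Finset.Icc 1 (mct g) := by
    apply Finset.eq_of_subset_of_card_le
    · intro x hx
      rcases Finset.mem_image.mp hx with ⟨i, hi, rfl⟩
      exact Finset.mem_Icc.mpr ⟨lowct_pos g (Finset.mem_filter.mp hi).2, lowct_le_m g i⟩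
    · rw [Finset.card_image_of_injOn hinj, Nat.card_Icc]
      have : B.card = mct g := rfl
      omega
  have hset : (univ.filter fun i => (g i : ℕ) = smax g - 1 ∧ lowct g i ≤ k)
      = B.filter (fun i => lowct g i ≤ k) := by
    ext i
    simp only [hB, Finset.mem_filter, Finset.mem_univ, true_and, and_assoc]
  rw [hset]
  calc (B.filter fun i => lowct g i ≤ k).card
      = ((B.filter fun i => lowct g i ≤ k).image (lowct g)).card :=
        (Finset.card_image_of_injOn (hinj.mono (Finset.coe_subset.2 (Finset.filter_subset _ _)))).symm
    _ = ((B.image (lowct g)).filter (fun x => x ≤ k)).card := by rw [Finset.filter_image]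
    _ = (Finset.Icc 1 k).card := by
        rw [himg]; congr 1; ext x
        simp only [Finset.mem_filter, Finset.mem_Icc]
        omega
    _ = k := by rw [Nat.card_Icc]; omega

end DownLift

section Lift
variable {r n : ℕ}

lemma lift_apply (g : Fin r → Fin (2*n)) (hn : 0 < n) (hr : 0 < r) (k : ℕ) (i : Fin r) :
    (liftP g k i : ℕ) = if (g i : ℕ) = smax g - 1 ∧ lowct g i ≤ k then 2*n - smax g else (g i : ℕ) := by
  have h1 := smax_pos g hr
  have h2 := smax_le_n g
  unfold liftP
  by_cases hc : (g i : ℕ) = smax g - 1 ∧ lowct g i ≤ k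
  · rw [dif_pos ⟨hc.1, hc.2, by omega⟩, if_pos hc]
  · rw [dif_neg (fun h => hc ⟨h.1, h.2.1⟩), if_neg hc]

lemma smax_lift (g : Fin r → Fin (2*n)) (hn : 0 < n) (hr : 0 < r) (k : ℕ) :
    smax (liftP g k) = smax g := by
  have h1 := smax_pos g hr
  have h2 := smax_le_n g
  unfold smax
  apply Finset.sup_congr rfl
  intro i _
  rw [lift_apply g hn hr k i]
  by_cases hc : (g i : ℕ) = smax g - 1 ∧ lowct g i ≤ k
  · rw [if_pos hc, hc.1, uval_high h1 (by omega), uval_low h1 (by omega)]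
  · rw [if_neg hc]

lemma lift_mono (g : Fin r → Fin (2*n)) (hn : 0 < n) (hr : 0 < r) (hg : Monotone g) (k : ℕ) :
    Monotone (liftP g k) := by
  intro i j hij
  have h1 := smax_pos g hr
  have h2 := smax_le_n g
  have hgi := (g i).isLt
  have hgj := (g j).isLt
  have hmono : (g i : ℕ) ≤ g j := hg hij
  have hci := uval_cases hgi (uval_le g i)
  have hcj := uval_cases hgj (uval_le g j)
  have hL := lowct_antitone g hij
  rw [Fin.le_def, lift_apply g hn hr k i, lift_apply g hn hr k j]
  split_ifs with hi hj hj <;> omega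

lemma lift_count_high (g : Fin r → Fin (2*n)) (hn : 0 < n) (hr : 0 < r)
    (hnh : ∀ i, (g i : ℕ) ≠ 2*n - smax g) (k : ℕ) (hk : k ≤ mct g) :
    countv (liftP g k) (2*n - smax g) = k := by
  have hset : (univ.filter fun i => (liftP g k i : ℕ) = 2*n - smax g)
      = univ.filter fun i => (g i : ℕ) = smax g - 1 ∧ lowct g i ≤ k := by
    ext i
    simp only [Finset.mem_filter, Finset.mem_univ, true_and]
    rw [lift_apply g hn hr k i]
    split_ifs with hc
    · exact ⟨fun _ => hc, fun _ => rfl⟩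
    · exact ⟨fun h => absurd h (hnh i), fun h => absurd h hc⟩
  unfold countv
  rw [hset, card_Sk g k hk]

lemma lift_count_low (g : Fin r → Fin (2*n)) (hn : 0 < n) (hr : 0 < r) (k : ℕ) (hk : k ≤ mct g) :
    countv (liftP g k) (smax g - 1) = mct g - k := by
  have h1 := smax_pos g hr
  have h2 := smax_le_n g
  have hne : 2*n - smax g ≠ smax g - 1 := by omega
  set B := univ.filter fun j : Fin r => (g j : ℕ) = smax g - 1 with hB
  have hset : (univ.filter fun i => (liftP g k i : ℕ) = smax g - 1)
      = B.filter (fun i => ¬ lowct g i ≤ k) := by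
    ext i
    simp only [hB, Finset.mem_filter, Finset.mem_univ, true_and]
    rw [lift_apply g hn hr k i]
    split_ifs with hc
    · exact ⟨fun h => absurd h hne, fun h => absurd hc.2 h.2⟩
    · constructor
      · intro h
        exact ⟨h, fun hL => hc ⟨h, hL⟩⟩
      · exact fun h => h.1
  have hcard1 : (B.filter (fun i => lowct g i ≤ k)).card = k := by
    have hseteq : B.filter (fun i => lowct g i ≤ k)
        = univ.filter (fun i => (g i : ℕ) = smax g - 1 ∧ lowct g i ≤ k) := by
      ext i
      simp only [hB, Finset.mem_filter, Finset.mem_univ, true_and, and_assoc]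
    rw [hseteq, card_Sk g k hk]
  have hBm : B.card = mct g := rfl
  have hsd : B.filter (fun i => ¬ lowct g i ≤ k) = B \ B.filter (fun i => lowct g i ≤ k) :=
    Finset.filter_not _ _
  unfold countv
  rw [hset, hsd, Finset.card_sdiff_of_subset (Finset.filter_subset _ _), hcard1, hBm]

lemma lift_count_other (g : Fin r → Fin (2*n)) (hn : 0 < n) (hr : 0 < r) (k : ℕ) (v : ℕ)
    (hv1 : v ≠ smax g - 1) (hv2 : v ≠ 2*n - smax g) :
    countv (liftP g k) v = countv g v := by
  unfold countv
  congr 1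
  ext i
  simp only [Finset.mem_filter, Finset.mem_univ, true_and]
  rw [lift_apply g hn hr k i]
  split_ifs with hc
  · exact iff_of_false (fun h => hv2 h.symm) (fun h => hv1 (h ▸ hc.1))
  · exact Iff.rfl

lemma down_lift (g : Fin r → Fin (2*n)) (hn : 0 < n) (hr : 0 < r)
    (hnh : ∀ i, (g i : ℕ) ≠ 2*n - smax g) (k : ℕ) :
    downP (liftP g k) = g := by
  have h1 := smax_pos g hr
  have h2 := smax_le_n g
  funext i
  apply Fin.ext
  rw [down_apply (liftP g k) hn i, smax_lift g hn hr k, lift_apply g hn hr k i]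
  by_cases hc : (g i : ℕ) = smax g - 1 ∧ lowct g i ≤ k
  · rw [if_pos hc, if_pos rfl, hc.1]
  · rw [if_neg hc, if_neg (hnh i)]
end Lift

section Fiber
variable {r n : ℕ}

lemma down_count_low (f : Fin r → Fin (2*n)) (hn : 0 < n) (hr : 0 < r) :
    countv (downP f) (smax f - 1) = countv f (smax f - 1) + countv f (2*n - smax f) := by
  have h1 := smax_pos f hr
  have h2 := smax_le_n f
  unfold countv
  rw [← Finset.card_union_of_disjoint]
  · congr 1
    ext i
    simp only [Finset.mem_union, Finset.mem_filter, Finset.mem_univ, true_and]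
    rw [down_apply f hn i]
    split_ifs with hc
    · exact ⟨fun _ => Or.inr hc, fun _ => rfl⟩
    · constructor
      · exact Or.inl
      · rintro (h | h)
        · exact h
        · exact absurd h hc
  · rw [Finset.disjoint_left]
    intro i hi1 hi2
    simp only [Finset.mem_filter, Finset.mem_univ, true_and] at hi1 hi2
    omega

lemma down_count_other (f : Fin r → Fin (2*n)) (hn : 0 < n) (hr : 0 < r) (v : ℕ)
    (hv1 : v ≠ smax f - 1) (hv2 : v ≠ 2*n - smax f) :
    countv (downP f) v = countv f v := by
  unfold countv
  congr 1
  ext i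
  simp only [Finset.mem_filter, Finset.mem_univ, true_and]
  rw [down_apply f hn i]
  split_ifs with hc
  · exact iff_of_false (fun h => hv1 h.symm) (fun h => hv2 (h ▸ hc))
  · exact Iff.rfl

lemma fiber_eq_lift (g : Fin r → Fin (2*n)) (hn : 0 < n) (hr : 0 < r)
    (hgm : Monotone g) (hnh : ∀ i, (g i : ℕ) ≠ 2*n - smax g)
    (f : Fin r → Fin (2*n)) (hf : Monotone f) (hdf : downP f = g) :
    ∃ k ≤ mct g, f = liftP g k := by
  have hs : smax g = smax f := by rw [← hdf, smax_down f hn hr]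
  set k := countv f (2*n - smax f) with hkdef
  have hmg : mct g = countv f (smax f - 1) + k := by
    have h := down_count_low f hn hr
    have hmm : mct g = countv (downP f) (smax f - 1) := by
      have e1 : mct g = countv g (smax g - 1) := rfl
      rw [e1, hs, hdf]
    rw [hmm, h]
  have hk' : k ≤ mct g := by omega
  refine ⟨k, hk', ?_⟩
  apply mono_eq_of_counts hf (lift_mono g hn hr hgm k)
  intro v
  have hconv : ∀ (h : Fin r → Fin (2*n)),
      (univ.filter fun j => h j = v).card = countv h (v : ℕ) := by
    intro h
    unfold countv
    congr 1
    ext j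
    simp [Fin.ext_iff]
  rw [hconv, hconv]
  by_cases hv1 : (v : ℕ) = smax g - 1
  · rw [hv1, lift_count_low g hn hr k hk']
    have : countv f (smax g - 1) = countv f (smax f - 1) := by rw [hs]
    omega
  · by_cases hv2 : (v : ℕ) = 2*n - smax g
    · rw [hv2, lift_count_high g hn hr hnh k hk', hkdef, hs]
    · rw [lift_count_other g hn hr k v hv1 hv2, ← hdf,
        down_count_other f hn hr v (by rw [← hs]; exact hv1) (by rw [← hs]; exact hv2)]


section Vol
variable {r n : ℕ}

lemma volFin_eq {r N : ℕ} (f : Fin r → Fin N) :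
    volFin (fun i => (f i : ℕ)) = ∏ v ∈ Finset.range N, Nat.factorial (countv f v) := by
  unfold volFin countv
  apply Finset.prod_subset
  · intro x hx
    rcases Finset.mem_image.mp hx with ⟨i, -, rfl⟩
    exact Finset.mem_range.mpr (f i).isLt
  · intro x _ hx
    have he : (univ.filter fun i => (f i : ℕ) = x) = ∅ := by
      rw [Finset.filter_eq_empty_iff]
      intro i _
      exact fun h => hx (Finset.mem_image.mpr ⟨i, Finset.mem_univ i, h⟩)
    rw [he]
    simp

lemma vol_lift (g : Fin r → Fin (2*n)) (hn : 0 < n) (hr : 0 < r)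
    (hnh : ∀ i, (g i : ℕ) ≠ 2*n - smax g) (k : ℕ) (hk : k ≤ mct g) :
    volFin (fun i => (liftP g k i : ℕ))
      = Nat.factorial k * (Nat.factorial (mct g - k) *
        ∏ v ∈ ((Finset.range (2*n)).erase (2*n - smax g)).erase (smax g - 1),
          Nat.factorial (countv g v)) := by
  have h1 := smax_pos g hr
  have h2 := smax_le_n g
  rw [volFin_eq]
  have hhigh : 2*n - smax g ∈ Finset.range (2*n) := Finset.mem_range.mpr (by omega)
  have hlow : smax g - 1 ∈ (Finset.range (2*n)).erase (2*n - smax g) := by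
    rw [Finset.mem_erase]
    exact ⟨by omega, Finset.mem_range.mpr (by omega)⟩
  rw [← Finset.mul_prod_erase _ _ hhigh, ← Finset.mul_prod_erase _ _ hlow]
  rw [lift_count_high g hn hr hnh k hk, lift_count_low g hn hr k hk]
  congr 1
  congr 1
  apply Finset.prod_congr rfl
  intro v hv
  rw [Finset.mem_erase] at hv
  have hv2 := hv.2
  rw [Finset.mem_erase] at hv2
  rw [lift_count_other g hn hr k v hv.1 hv2.1]

lemma prod_lift {V : Type*} {K : Type*} [Field K] (g : Fin r → Fin (2*n)) (hn : 0 < n)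
    (hr : 0 < r) (σ : ℕ → PStep V) (ω : Fin r → V → V → K) (k : ℕ) (hk : k ≤ mct g) :
    (∏ i, PStep.pair (ω i) (concatP n σ (invP n σ) ((liftP g k i : ℕ) + 1)))
      = (-1)^k * ∏ i, PStep.pair (ω i) (concatP n σ (invP n σ) ((g i : ℕ) + 1)) := by
  have h1 := smax_pos g hr
  have h2 := smax_le_n g
  have hpt : ∀ i : Fin r, PStep.pair (ω i) (concatP n σ (invP n σ) ((liftP g k i : ℕ) + 1))
      = (if (g i : ℕ) = smax g - 1 ∧ lowct g i ≤ k then (-1 : K) else 1)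
        * PStep.pair (ω i) (concatP n σ (invP n σ) ((g i : ℕ) + 1)) := by
    intro i
    rw [lift_apply g hn hr k i]
    split_ifs with hc
    · rw [hc.1]
      have e1 : 2*n - smax g + 1 = 2*n + 1 - smax g := by omega
      have e2 : smax g - 1 + 1 = smax g := by omega
      rw [e1, e2, concat_inv_reflect n σ (smax g) h1 h2, pair_inv']
      ring
    · rw [one_mul]
  rw [Finset.prod_congr rfl (fun i _ => hpt i), Finset.prod_mul_distrib]
  congr 1
  rw [Finset.prod_ite, Finset.prod_const, Finset.prod_const, one_pow, mul_one]
  congr 1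
  exact card_Sk g k hk

lemma inner_sum_zero {V : Type*} {K : Type*} [Field K] [CharZero K]
    (hn : 0 < n) (hr : 0 < r) (σ : ℕ → PStep V) (ω : Fin r → V → V → K)
    (g : Fin r → Fin (2*n)) (hgm : Monotone g)
    (hnh : ∀ i, (g i : ℕ) ≠ 2*n - smax g) :
    ∑ f ∈ (univ.filter (fun f : Fin r → Fin (2*n) => Monotone f)).filter (fun f => downP f = g),
      (∏ i, PStep.pair (ω i) (concatP n σ (invP n σ) ((f i : ℕ) + 1)))
        / (volFin (fun i => (f i : ℕ)) : K) = 0 := by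
  have hm := mct_pos g hr hnh
  have hfib : (univ.filter (fun f : Fin r → Fin (2*n) => Monotone f)).filter
        (fun f => downP f = g)
      = (Finset.range (mct g + 1)).image (liftP g) := by
    ext f
    simp only [Finset.mem_filter, Finset.mem_univ, true_and, Finset.mem_image, Finset.mem_range]
    constructor
    · rintro ⟨hfm, hdf⟩
      obtain ⟨k, hk, rfl⟩ := fiber_eq_lift g hn hr hgm hnh f hfm hdf
      exact ⟨k, by omega, rfl⟩
    · rintro ⟨k, hk, rfl⟩
      exact ⟨lift_mono g hn hr hgm k, down_lift g hn hr hnh k⟩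
  have hinj : ∀ k1 ∈ Finset.range (mct g + 1), ∀ k2 ∈ Finset.range (mct g + 1),
      liftP g k1 = liftP g k2 → k1 = k2 := by
    intro k1 h1 k2 h2 he
    rw [Finset.mem_range] at h1 h2
    have e1 := lift_count_high g hn hr hnh k1 (by omega)
    have e2 := lift_count_high g hn hr hnh k2 (by omega)
    rw [he] at e1
    omega
  rw [hfib, Finset.sum_image hinj]
  set m := mct g with hmdef
  set C := ∏ v ∈ ((Finset.range (2*n)).erase (2*n - smax g)).erase (smax g - 1),
    Nat.factorial (countv g v) with hCdef
  set P := ∏ i, PStep.pair (ω i) (concatP n σ (invP n σ) ((g i : ℕ) + 1)) with hPdef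
  have hCpos : 0 < C := Finset.prod_pos fun v _ => Nat.factorial_pos _
  have hCne : C ≠ 0 := by omega
  have hterm : ∀ k ∈ Finset.range (m + 1),
      (∏ i, PStep.pair (ω i) (concatP n σ (invP n σ) ((liftP g k i : ℕ) + 1)))
        / (volFin (fun i => (liftP g k i : ℕ)) : K)
      = P / ((Nat.factorial m * C : ℕ) : K) * ((-1)^k * (m.choose k : K)) := by
    intro k hk
    rw [Finset.mem_range] at hk
    have hk' : k ≤ m := by omega
    rw [prod_lift g hn hr σ ω k hk', vol_lift g hn hr hnh k hk', ← hCdef, ← hPdef]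
    have hne1 : ((Nat.factorial k * (Nat.factorial (m - k) * C) : ℕ) : K) ≠ 0 :=
      Nat.cast_ne_zero.mpr
        (Nat.mul_ne_zero (Nat.factorial_ne_zero _)
          (Nat.mul_ne_zero (Nat.factorial_ne_zero _) hCne))
    have hne2 : ((Nat.factorial m * C : ℕ) : K) ≠ 0 :=
      Nat.cast_ne_zero.mpr (Nat.mul_ne_zero (Nat.factorial_ne_zero _) hCne)
    rw [div_mul_eq_mul_div, div_eq_div_iff hne1 hne2]
    have e := Nat.choose_mul_factorial_mul_factorial hk'
    have e'' : Nat.factorial m = m.choose k * (Nat.factorial k * Nat.factorial (m - k)) := by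
      rw [← e]; ring
    have e' : ((Nat.factorial m : ℕ) : K)
        = (m.choose k : K) * ((Nat.factorial k : K) * (Nat.factorial (m - k) : K)) := by
      exact_mod_cast e''
    push_cast
    rw [e']
    ring
  rw [Finset.sum_congr rfl hterm, ← Finset.mul_sum]
  have hz : (∑ k ∈ Finset.range (m + 1), ((-1 : K))^k * (m.choose k : K)) = 0 := by
    have hzz := Int.alternating_sum_range_choose (n := m)
    rw [if_neg (by omega)] at hzz
    have hcast := congrArg (fun z : ℤ => (z : K)) hzz
    push_cast at hcast
    exact hcast
  rw [hz, mul_zero]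

end Vol

/-- Cancellation of backtracking: `∫_{α⋆α⁻¹} ω_1⋯ω_r = 0` for all `r ≥ 1`. -/
theorem stmt12 {V : Type*} (K : Type*) [Field K] [CharZero K] (G : Digraph' V)
    (n : ℕ) (σ : ℕ → PStep V) (h : IsPathMap G n σ)
    (r : ℕ) (hr : 1 ≤ r) (ω : Fin r → V → V → K) :
    iint K (2 * n) (concatP n σ (invP n σ)) r ω = 0 := by
  rcases Nat.eq_zero_or_pos n with hn | hn
  · subst hn
    haveI : IsEmpty (Fin r → Fin (2*0)) := ⟨fun f => (f ⟨0, hr⟩).elim0⟩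
    rw [iint, Finset.univ_eq_empty, Finset.filter_empty, Finset.sum_empty]
  · rw [iint]
    rw [← Finset.sum_fiberwise_of_maps_to (g := downP)
      (t := (univ.filter (fun f : Fin r → Fin (2*n) => Monotone f)).image downP)
      (fun f hf => Finset.mem_image_of_mem _ hf)]
    apply Finset.sum_eq_zero
    intro g hg
    rcases Finset.mem_image.mp hg with ⟨f0, hf0, rfl⟩
    exact inner_sum_zero hn hr σ ω (downP f0)
      (down_mono f0 hn hr (Finset.mem_filter.mp hf0).2)
      (down_ne_high f0 hn hr)
end Fiber
end

section
/- Commutator order estimate (leading term): let α be a loop at x of order at least r and β a loop at x of order at least s, with r ≤ s. Then the commutator loop [α,β] = α⋆β⋆α^{-1}⋆β^{-1} has order at least r+s, and for 1-forms ω_1,...,ω_{r+s}: ∫_{[α,β]} ω_1···ω_{r+s} = (∫_α ω_1···ω_r)(∫_β ω_{r+1}···ω_{r+s}) - (∫_β ω_1···ω_s)(∫_α ω_{s+1}···ω_{r+s}). -/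
open Finset

attribute [local instance] Classical.propDecidable

/-- A path map is at least of order `r` if all iterated integrals of length `≤ r-1`
vanish on it. -/
def atLeastOrder (K : Type*) [Field K] {V : Type*} (n : ℕ) (σ : ℕ → PStep V) (r : ℕ) : Prop :=
  ∀ l : ℕ, 1 ≤ l → l ≤ r - 1 → ∀ ω : Fin l → V → V → K, iint K n σ l ω = 0

/-!
The iterated integrals of `ω_a ⋯ ω_{b-1}` along a path are the entries of its kernel, an element
of the incidence algebra of `ℕ`. A single step contributes `∏ ⟨ω_j, e⟩ / (b - a)!`, concatenating
paths multiplies kernels (Chen), and reversing a path inverts its kernel: off the diagonal, the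
product of the kernels of a step and of its reverse is a multiple of
`∑ (-1)^i / (i! (L - i)!) = (1 - 1)^L / L! = 0`. A loop of order `≥ r` has kernel `1 + X` with `X`
vanishing within distance `r` of the diagonal, and these gaps add under multiplication. Since
`A B A' B' - 1 = (A B - B A) A' B'` and `A B - B A = X Y - Y X`, the commutator has kernel
`1 + X Y - Y X` up to gap `r + s + 1`, and the entry of `X Y` at distance exactly `r + s` is the
single product `X(a, a + r) Y(a + r, a + r + s)`.
-/

section FilteredRing

variable {R : Type*} [Ring R] {I : ℕ → AddSubgroup R}

theorem commutator_sub_one_mem (hI : Antitone I)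
    (hmul : ∀ {p q : ℕ} {x y : R}, x ∈ I p → y ∈ I q → x * y ∈ I (p + q))
    {r s : ℕ} {A B A' B' : R} (hA : A - 1 ∈ I r) (hB : B - 1 ∈ I s)
    (hA' : A' - 1 ∈ I 1) (hB' : B' - 1 ∈ I 1) (hAA' : A * A' = 1) (hBB' : B * B' = 1) :
    A * B * A' * B' - 1 ∈ I (r + s) ∧
      A * B * A' * B' - 1 - ((A - 1) * (B - 1) - (B - 1) * (A - 1)) ∈ I (r + s + 1) := by
  set C := (A - 1) * (B - 1) - (B - 1) * (A - 1)
  have hC : C ∈ I (r + s) := sub_mem (hmul hA hB) (add_comm s r ▸ hmul hB hA)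
  have hD : A' * B' - 1 ∈ I 1 := by
    have h2 : (A' - 1) * (B' - 1) ∈ I 1 := hI (by omega) (hmul hA' hB')
    convert add_mem (add_mem h2 hA') hB' using 1
    noncomm_ring
  have hBAA'B' : B * A * A' * B' = 1 := by rw [mul_assoc B, hAA', mul_one, hBB']
  have hcomm : A * B * A' * B' - 1 = C * (A' * B') := by
    rw [← hBAA'B']
    simp only [C]
    noncomm_ring
  have hrest : A * B * A' * B' - 1 - C ∈ I (r + s + 1) := by
    rw [hcomm, show C * (A' * B') - C = C * (A' * B' - 1) by noncomm_ring]
    exact hmul hC hD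
  exact ⟨by simpa using add_mem (hI (Nat.le_succ _) hrest) hC, hrest⟩

end FilteredRing

namespace IncidenceAlgebra

variable (K : Type*) [Ring K]

def gapSubgroup (p : ℕ) : AddSubgroup (IncidenceAlgebra K ℕ) where
  carrier := {f | ∀ a b, b < a + p → f a b = 0}
  add_mem' hf hg a b h := by simp [add_apply, hf a b h, hg a b h]
  zero_mem' _ _ _ := rfl
  neg_mem' hf a b h := by simp [neg_apply, hf a b h]

variable {K}

theorem gapSubgroup_antitone : Antitone (gapSubgroup K) :=
  fun _ _ hpq _ hf a b h => hf a b (by omega)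

theorem mul_mem_gapSubgroup {p q : ℕ} {f g : IncidenceAlgebra K ℕ}
    (hf : f ∈ gapSubgroup K p) (hg : g ∈ gapSubgroup K q) : f * g ∈ gapSubgroup K (p + q) := by
  intro a b h
  rw [mul_apply]
  refine Finset.sum_eq_zero fun c _ => ?_
  by_cases hc : c < a + p
  · rw [hf a c hc, zero_mul]
  · rw [hg c b (by omega), mul_zero]

theorem mul_apply_of_mem_gapSubgroup {p q : ℕ} {f g : IncidenceAlgebra K ℕ}
    (hf : f ∈ gapSubgroup K p) (hg : g ∈ gapSubgroup K q) (a : ℕ) :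
    (f * g) a (a + p + q) = f a (a + p) * g (a + p) (a + p + q) := by
  rw [mul_apply, Finset.sum_eq_single (a + p)]
  · intro c _ hc
    by_cases hc' : c < a + p
    · rw [hf a c hc', zero_mul]
    · rw [hg c _ (by omega), mul_zero]
  · simp

theorem sub_one_apply_of_ne (f : IncidenceAlgebra K ℕ) {a b : ℕ} (h : a ≠ b) :
    (f - 1) a b = f a b := by
  rw [sub_apply, one_apply, if_neg h, sub_zero]

theorem apply_add_add_of_sub_commutator_mem {A B C : IncidenceAlgebra K ℕ} {r s : ℕ}
    (hr : r ≠ 0) (hs : s ≠ 0) (hA : A - 1 ∈ gapSubgroup K r) (hB : B - 1 ∈ gapSubgroup K s)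
    (hC : C - 1 - ((A - 1) * (B - 1) - (B - 1) * (A - 1)) ∈ gapSubgroup K (r + s + 1)) (a : ℕ) :
    C a (a + r + s) =
      A a (a + r) * B (a + r) (a + r + s) - B a (a + s) * A (a + s) (a + r + s) := by
  have hYX := mul_apply_of_mem_gapSubgroup hB hA a
  rw [add_right_comm a s r] at hYX
  have h := hC a (a + r + s) (by omega)
  rw [sub_apply, sub_apply (_ * _), mul_apply_of_mem_gapSubgroup hA hB, hYX, sub_eq_zero] at h
  rwa [sub_one_apply_of_ne _ (by omega), sub_one_apply_of_ne _ (by omega),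
    sub_one_apply_of_ne _ (by omega), sub_one_apply_of_ne _ (by omega),
    sub_one_apply_of_ne _ (by omega)] at h

theorem sub_one_mem_gapSubgroup_one {f : IncidenceAlgebra K ℕ} (hf : ∀ a, f a a = 1) :
    f - 1 ∈ gapSubgroup K 1 := by
  intro a b h
  rcases Nat.lt_or_eq_of_le (Nat.lt_succ_iff.mp h) with h | rfl
  · simp [apply_eq_zero_of_not_le (not_le.mpr h)]
  · simp [sub_apply, hf]

end IncidenceAlgebra

open IncidenceAlgebra

section Kernels

variable {V K : Type*} [Field K]

def stepKernel (ω : ℕ → V → V → K) (e : PStep V) : IncidenceAlgebra K ℕ :=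
  ⟨fun a b => if a ≤ b then (∏ j ∈ Ico a b, PStep.pair (ω j) e) / (b - a).factorial else 0,
    fun _ _ h => if_neg h⟩

theorem stepKernel_apply (ω : ℕ → V → V → K) (e : PStep V) {a b : ℕ} (h : a ≤ b) :
    stepKernel ω e a b = (∏ j ∈ Ico a b, PStep.pair (ω j) e) / (b - a).factorial := if_pos h

def pathKernel (σ : ℕ → PStep V) (ω : ℕ → V → V → K) : ℕ → IncidenceAlgebra K ℕ
  | 0 => 1
  | k + 1 => pathKernel σ ω k * stepKernel ω (σ (k + 1))

theorem pathKernel_apply_self (σ : ℕ → PStep V) (ω : ℕ → V → V → K) (k a : ℕ) :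
    pathKernel σ ω k a a = 1 := by
  induction k with
  | zero => simp [pathKernel]
  | succ k ih => simp [pathKernel, ih, stepKernel_apply]

theorem pathKernel_congr {σ σ' : ℕ → PStep V} (ω : ℕ → V → V → K) {k : ℕ}
    (h : ∀ t, 1 ≤ t → t ≤ k → σ t = σ' t) : pathKernel σ ω k = pathKernel σ' ω k := by
  induction k with
  | zero => rfl
  | succ k ih =>
    rw [pathKernel, pathKernel, ih fun t h1 h2 => h t h1 (by omega), h (k + 1) (by omega) le_rfl]

theorem pathKernel_concatP (σ τ : ℕ → PStep V) (ω : ℕ → V → V → K) (n m : ℕ) :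
    pathKernel (concatP n σ τ) ω (n + m) = pathKernel σ ω n * pathKernel τ ω m := by
  induction m with
  | zero =>
    rw [Nat.add_zero, pathKernel, mul_one]
    exact pathKernel_congr ω fun t _ ht => if_pos ht
  | succ m ih =>
    have hstep : concatP n σ τ (n + m + 1) = τ (m + 1) := by
      rw [concatP, if_neg (by omega)]
      congr 1
      omega
    rw [← Nat.add_assoc, pathKernel, ih, hstep, pathKernel, mul_assoc]

theorem pathKernel_succ_eq_stepKernel_mul (σ : ℕ → PStep V) (ω : ℕ → V → V → K) (k : ℕ) :
    pathKernel σ ω (k + 1) = stepKernel ω (σ 1) * pathKernel (fun t => σ (t + 1)) ω k := by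
  have h : pathKernel σ ω (1 + k) = pathKernel (concatP 1 σ fun t => σ (t + 1)) ω (1 + k) :=
    pathKernel_congr ω fun t ht _ => by
      unfold concatP
      split_ifs
      · rfl
      · congr 1
        omega
  rw [Nat.add_comm, h, pathKernel_concatP, pathKernel, pathKernel, one_mul]

theorem stepKernel_inv_apply (ω : ℕ → V → V → K) (e : PStep V) (a b : ℕ) :
    stepKernel ω e.inv a b = (-1) ^ (b - a) * stepKernel ω e a b := by
  by_cases h : a ≤ b
  · have hpair : ∀ j, PStep.pair (ω j) e.inv = -1 * PStep.pair (ω j) e := fun j => by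
      cases e <;> simp [PStep.pair, PStep.inv]
    simp only [stepKernel_apply ω _ h, hpair, Finset.prod_mul_distrib, Finset.prod_const,
      Nat.card_Ico, mul_div_assoc]
  · simp [apply_eq_zero_of_not_le h]

theorem sum_range_neg_one_pow_div_factorial_mul_factorial [CharZero K] {L : ℕ} (hL : L ≠ 0) :
    ∑ i ∈ range (L + 1), (-1 : K) ^ (L - i) / (i.factorial * (L - i).factorial) = 0 := by
  have hbinom : ∑ i ∈ range (L + 1), (-1 : K) ^ (L - i) * (L.choose i : K) = 0 := by
    simpa [zero_pow hL, add_pow] using (add_pow (1 : K) (-1) L).symm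
  rw [← mul_eq_zero_iff_left (Nat.cast_ne_zero.mpr L.factorial_ne_zero : (L.factorial : K) ≠ 0),
    Finset.mul_sum, ← hbinom]
  refine Finset.sum_congr rfl fun i hi => ?_
  rw [Nat.cast_choose K (Nat.lt_succ_iff.mp (Finset.mem_range.mp hi))]
  ring

theorem stepKernel_mul_stepKernel_inv [CharZero K] (ω : ℕ → V → V → K) (e : PStep V) :
    stepKernel ω e * stepKernel ω e.inv = 1 := by
  refine IncidenceAlgebra.ext fun a b hab => ?_
  rcases hab.eq_or_lt with rfl | hab
  · simp [stepKernel_apply]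
  have hterm : ∀ c ∈ Icc a b, stepKernel ω e a c * stepKernel ω e.inv c b
      = (∏ j ∈ Ico a b, PStep.pair (ω j) e) *
        ((-1 : K) ^ (b - c) / ((c - a).factorial * (b - c).factorial)) := by
    intro c hc
    obtain ⟨hac, hcb⟩ := Finset.mem_Icc.mp hc
    rw [stepKernel_inv_apply, stepKernel_apply ω e hac, stepKernel_apply ω e hcb,
      ← Finset.prod_Ico_consecutive _ hac hcb]
    field_simp
  have hsum : ∑ c ∈ Icc a b, (-1 : K) ^ (b - c) / ((c - a).factorial * (b - c).factorial) = 0 := by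
    rw [← Ico_add_one_right_eq_Icc, Finset.sum_Ico_eq_sum_range,
      show b + 1 - a = b - a + 1 by omega]
    convert sum_range_neg_one_pow_div_factorial_mul_factorial (K := K) (L := b - a) (by omega)
      using 2 with i hi
    rw [Finset.mem_range] at hi
    rw [show b - (a + i) = b - a - i by omega, Nat.add_sub_cancel_left]
  rw [mul_apply, Finset.sum_congr rfl hterm, ← Finset.mul_sum, hsum, mul_zero, one_apply,
    if_neg hab.ne]

theorem pathKernel_mul_invP [CharZero K] (σ : ℕ → PStep V) (ω : ℕ → V → V → K) (n : ℕ) :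
    pathKernel σ ω n * pathKernel (invP n σ) ω n = 1 := by
  induction n with
  | zero => exact mul_one 1
  | succ n ih =>
    have hinv : pathKernel (invP (n + 1) σ) ω (n + 1)
        = stepKernel ω (σ (n + 1)).inv * pathKernel (invP n σ) ω n := by
      rw [pathKernel_succ_eq_stepKernel_mul]
      congr 2
      funext t
      simp only [invP]
      congr 2
      omega
    rw [hinv, pathKernel, mul_assoc, ← mul_assoc (stepKernel _ _), stepKernel_mul_stepKernel_inv,
      one_mul, ih]

end Kernels

section MonotoneMaps

variable {n c l : ℕ}

def padLast (g : Fin c → Fin n) : Fin l → Fin (n + 1) :=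
  fun i => if h : (i : ℕ) < c then (g ⟨i, h⟩).castSucc else Fin.last n

theorem val_padLast_lt_iff (g : Fin c → Fin n) (i : Fin l) :
    (padLast g i : ℕ) < n ↔ (i : ℕ) < c := by
  unfold padLast
  split_ifs with h
  · simp [h]
  · simp [h]

theorem monotone_padLast {g : Fin c → Fin n} (hg : Monotone g) :
    Monotone (padLast g : Fin l → Fin (n + 1)) := by
  intro i j hij
  unfold padLast
  split_ifs with hi hj hj
  · exact Fin.castSucc_le_castSucc_iff.mpr (hg (Fin.mk_le_mk.mpr hij))
  · exact Fin.le_last _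
  · exact absurd (lt_of_le_of_lt (Fin.le_def.mp hij) hj) hi
  · exact le_rfl

theorem card_padLast_lt (hc : c ≤ l) (g : Fin c → Fin n) :
    #{i : Fin l | (padLast g i : ℕ) < n} = c := by
  simp only [val_padLast_lt_iff, Fin.card_filter_val_lt, min_eq_right hc]

theorem val_lt_iff_of_monotone {f : Fin l → Fin (n + 1)} (hf : Monotone f)
    (hcard : #{i | (f i : ℕ) < n} = c) (i : Fin l) : (f i : ℕ) < n ↔ (i : ℕ) < c := by
  have hsub : ∀ j : Fin l, (f j : ℕ) < n → ∀ k : Fin l, k ≤ j → (f k : ℕ) < n :=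
    fun j hj k hkj => lt_of_le_of_lt (hf hkj) hj
  subst hcard
  constructor
  · intro hi
    have : #{k : Fin l | (k : ℕ) < i + 1} ≤ #{k | (f k : ℕ) < n} :=
      Finset.card_le_card fun k hk => by
        simp only [Finset.mem_filter, Finset.mem_univ, true_and] at hk ⊢
        exact hsub i hi k (Fin.le_def.mpr (by omega))
    rw [Fin.card_filter_val_lt] at this
    omega
  · intro hi
    by_contra hn
    have : #{k | (f k : ℕ) < n} ≤ #{k : Fin l | (k : ℕ) < i} :=
      Finset.card_le_card fun k hk => by
        simp only [Finset.mem_filter, Finset.mem_univ, true_and] at hk ⊢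
        by_contra hki
        exact hn (hsub k hk i (Fin.le_def.mpr (by omega)))
    rw [Fin.card_filter_val_lt] at this
    omega

theorem volFin_eq_prod_range {r N : ℕ} {v : Fin r → ℕ} (hv : ∀ i, v i < N) :
    volFin v = ∏ k ∈ range N, (#{j | v j = k}).factorial := by
  refine Finset.prod_subset (fun k hk => ?_) fun k _ hk => ?_
  · obtain ⟨i, -, rfl⟩ := Finset.mem_image.mp hk
    exact Finset.mem_range.mpr (hv i)
  · rw [Finset.filter_false_of_mem fun j _ hj => hk (Finset.mem_image.mpr ⟨j, by simp, hj⟩)]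
    rfl

theorem volFin_padLast (hc : c ≤ l) (g : Fin c → Fin n) :
    volFin (fun i : Fin l => (padLast g i : ℕ))
      = volFin (fun j => (g j : ℕ)) * (l - c).factorial := by
  have hfiber : ∀ k < n,
      #{i : Fin l | (padLast g i : ℕ) = k} = #{j | (g j : ℕ) = k} := by
    intro k hk
    rw [← Finset.card_map (Fin.castLEEmb hc)]
    congr 1
    ext i
    simp only [Finset.mem_filter, Finset.mem_univ, true_and, Finset.mem_map, Fin.castLEEmb_apply]
    unfold padLast
    split_ifs with hi
    · exact ⟨fun h => ⟨⟨i, hi⟩, h, rfl⟩, by rintro ⟨j, hj, rfl⟩; exact hj⟩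
    · refine ⟨fun h => absurd h (by simp; omega), ?_⟩
      rintro ⟨j, -, rfl⟩
      exact absurd j.isLt hi
  have htop : #{i : Fin l | (padLast g i : ℕ) = n} = l - c := by
    have : #{i : Fin l | (padLast g i : ℕ) = n} = #{i : Fin l | ¬ (i : ℕ) < c} := by
      congr 1
      ext i
      have := (padLast g i).isLt
      simp only [Finset.mem_filter, Finset.mem_univ, true_and, ← val_padLast_lt_iff g i]
      omega
    rw [this, Finset.filter_not, Finset.card_sdiff_of_subset (Finset.filter_subset _ _),
      Fin.card_filter_val_lt, Finset.card_univ, Fintype.card_fin, min_eq_right hc]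
  rw [volFin_eq_prod_range (N := n + 1) fun i : Fin l => (padLast g i).isLt,
    volFin_eq_prod_range (N := n) fun j => (g j).isLt, Finset.prod_range_succ, htop]
  congr 1
  exact Finset.prod_congr rfl fun k hk => by rw [hfiber k (Finset.mem_range.mp hk)]

end MonotoneMaps

section IteratedIntegrals

variable {V K : Type*} [Field K]

noncomputable def iintSummand (σ : ℕ → PStep V) {r N : ℕ} (ω : Fin r → V → V → K)
    (f : Fin r → Fin N) : K :=
  (∏ i, PStep.pair (ω i) (σ ((f i : ℕ) + 1))) / (volFin (fun i => (f i : ℕ)) : K)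

theorem iint_eq_sum_iintSummand (σ : ℕ → PStep V) (n r : ℕ) (ω : Fin r → V → V → K) :
    iint K n σ r ω = ∑ f ∈ {f : Fin r → Fin n | Monotone f}, iintSummand σ ω f := rfl

theorem iint_zero (σ : ℕ → PStep V) (l : ℕ) (ω : Fin l → V → V → K) :
    iint K 0 σ l ω = if l = 0 then 1 else 0 := by
  cases l with
  | zero => simp [iint, volFin, Subsingleton.monotone]
  | succ l => simp [iint]

theorem prod_pair_padLast (σ : ℕ → PStep V) (w : ℕ → V → V → K) {n c l : ℕ} (hc : c ≤ l)
    (g : Fin c → Fin n) :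
    ∏ i : Fin l, PStep.pair (w i) (σ ((padLast g i : ℕ) + 1))
      = (∏ i : Fin c, PStep.pair (w i) (σ ((g i : ℕ) + 1)))
        * ∏ j ∈ Ico c l, PStep.pair (w j) (σ (n + 1)) := by
  set F : ℕ → K := fun t =>
    PStep.pair (w t) (σ (if h : t < c then (g ⟨t, h⟩ : ℕ) + 1 else n + 1))
  have hF : ∀ i : Fin l, PStep.pair (w i) (σ ((padLast g i : ℕ) + 1)) = F i := fun i => by
    simp only [F, padLast]
    split_ifs <;> rfl
  rw [Finset.prod_congr rfl fun i _ => hF i, Fin.prod_univ_eq_prod_range F,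
    ← Finset.prod_range_mul_prod_Ico F hc, ← Fin.prod_univ_eq_prod_range F]
  congr 1
  · exact Finset.prod_congr rfl fun i _ => by simp [F]
  · exact Finset.prod_congr rfl fun j hj => by simp [F, not_lt.mpr (Finset.mem_Ico.mp hj).1]

/- A monotone `f : Fin l → Fin (n + 1)` with exactly `c` values below `n` is `padLast g` for a
unique monotone `g : Fin c → Fin n`; its `l - c` indices at the last step give the step kernel. -/
theorem sum_iintSummand_card_lt_eq (σ : ℕ → PStep V) (w : ℕ → V → V → K) {n l c : ℕ}
    (hc : c ≤ l) :
    ∑ f ∈ {f : Fin l → Fin (n + 1) | Monotone f ∧ #{i | (f i : ℕ) < n} = c},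
        iintSummand σ (fun i => w i) f
      = iint K n σ c (fun i => w i) * stepKernel w (σ (n + 1)) c l := by
  rw [iint_eq_sum_iintSummand, Finset.sum_mul]
  symm
  refine Finset.sum_bij' (fun g _ => padLast g)
    (fun f hf j => ⟨f (Fin.castLE hc j), (val_lt_iff_of_monotone (Finset.mem_filter.mp hf).2.1
      (Finset.mem_filter.mp hf).2.2 _).mpr j.isLt⟩) ?_ ?_ ?_ ?_ ?_
  · intro g hg
    simp only [Finset.mem_filter, Finset.mem_univ, true_and] at hg ⊢
    exact ⟨monotone_padLast hg, card_padLast_lt hc g⟩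
  · intro f hf
    simp only [Finset.mem_filter, Finset.mem_univ, true_and] at hf ⊢
    intro j₁ j₂ hj
    exact hf.1 hj
  · intro g _
    funext j
    simp [padLast]
  · intro f hf
    have hf' := (Finset.mem_filter.mp hf).2
    funext i
    simp only [padLast]
    split_ifs with hi
    · rfl
    · have := (f i).isLt
      have := (val_lt_iff_of_monotone hf'.1 hf'.2 i).not.mpr hi
      exact Fin.ext (by simp; omega)
  · intro g _
    rw [iintSummand, iintSummand, prod_pair_padLast σ w hc, volFin_padLast hc,
      stepKernel_apply _ _ hc]
    push_cast
    rw [div_mul_div_comm]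

theorem iint_succ (σ : ℕ → PStep V) (w : ℕ → V → V → K) (n l : ℕ) :
    iint K (n + 1) σ l (fun i => w i)
      = ∑ c ∈ range (l + 1), iint K n σ c (fun i => w i) * stepKernel w (σ (n + 1)) c l := by
  have hmaps : ∀ f ∈ ({f : Fin l → Fin (n + 1) | Monotone f} : Finset _),
      #{i | (f i : ℕ) < n} ∈ range (l + 1) := fun f _ =>
    Finset.mem_range.mpr (Nat.lt_succ_of_le ((Finset.card_filter_le _ _).trans_eq (by simp)))
  rw [iint_eq_sum_iintSummand, ← Finset.sum_fiberwise_of_maps_to hmaps]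
  refine Finset.sum_congr rfl fun c hc => ?_
  rw [Finset.filter_filter,
    sum_iintSummand_card_lt_eq σ w (Nat.lt_succ_iff.mp (Finset.mem_range.mp hc))]

theorem stepKernel_apply_add_add (ω : ℕ → V → V → K) (e : PStep V) (a k l : ℕ) :
    stepKernel ω e (a + k) (a + l) = stepKernel (fun j => ω (a + j)) e k l := by
  by_cases h : k ≤ l
  · rw [stepKernel_apply _ _ h, stepKernel_apply _ _ (by omega), Nat.add_sub_add_left,
      Finset.prod_Ico_add (fun j => PStep.pair (ω j) e) k l a, add_comm k, add_comm l]
  · rw [apply_eq_zero_of_not_le h, apply_eq_zero_of_not_le (by omega)]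

theorem pathKernel_apply_add (σ : ℕ → PStep V) (ω : ℕ → V → V → K) (n a l : ℕ) :
    pathKernel σ ω n a (a + l) = iint K n σ l (fun i => ω (a + i)) := by
  induction n generalizing l with
  | zero =>
    rw [pathKernel, one_apply, iint_zero]
    simp
  | succ n ih =>
    rw [pathKernel, mul_apply, ← Ico_add_one_right_eq_Icc, Finset.sum_Ico_eq_sum_range,
      show a + l + 1 - a = l + 1 by omega, iint_succ σ (fun j => ω (a + j))]
    exact Finset.sum_congr rfl fun k _ => by rw [ih, stepKernel_apply_add_add]

end IteratedIntegrals

section Order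

variable {V K : Type*} [Field K]

theorem iint_eq_pathKernel_apply (σ : ℕ → PStep V) (ω : ℕ → V → V → K) {l : ℕ}
    {ν : Fin l → V → V → K} (n a : ℕ) (h : ∀ i : Fin l, ν i = ω (a + i)) :
    iint K n σ l ν = pathKernel σ ω n a (a + l) := by
  rw [pathKernel_apply_add]
  exact congrArg _ (funext h)

theorem pathKernel_sub_one_mem_gapSubgroup_one (σ : ℕ → PStep V) (ω : ℕ → V → V → K) (n : ℕ) :
    pathKernel σ ω n - 1 ∈ gapSubgroup K 1 :=
  sub_one_mem_gapSubgroup_one (pathKernel_apply_self σ ω n)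

theorem pathKernel_sub_one_mem_gapSubgroup {σ : ℕ → PStep V} {n r : ℕ}
    (h : atLeastOrder K n σ r) (ω : ℕ → V → V → K) : pathKernel σ ω n - 1 ∈ gapSubgroup K r := by
  intro a b hab
  rcases le_or_gt b a with hba | hab'
  · exact pathKernel_sub_one_mem_gapSubgroup_one σ ω n a b (by omega)
  · obtain ⟨l, rfl⟩ := Nat.exists_eq_add_of_le hab'.le
    rw [sub_one_apply_of_ne _ (by omega), pathKernel_apply_add]
    exact h l (by omega) (by omega) _

end Order

/-- Commutator order estimate: if `α` is a loop at `x` of order `≥ r` and `β` a loop at `x`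
of order `≥ s` with `r ≤ s`, then `[α,β] = α⋆β⋆α⁻¹⋆β⁻¹` has order `≥ r+s`, and
`∫_{[α,β]} ω_1⋯ω_{r+s} = (∫_α ω_1⋯ω_r)(∫_β ω_{r+1}⋯ω_{r+s}) - (∫_β ω_1⋯ω_s)(∫_α ω_{s+1}⋯ω_{r+s})`. -/
theorem stmt18 {V : Type*} (K : Type*) [Field K] [CharZero K]
    (n m r s : ℕ) (hr : 1 ≤ r) (hrs : r ≤ s)
    (σ τ : ℕ → PStep V)
    (hoσ : atLeastOrder K n σ r) (hoτ : atLeastOrder K m τ s) :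
    (∀ l : ℕ, 1 ≤ l → l ≤ r + s - 1 → ∀ ω : Fin l → V → V → K,
      iint K (2 * (n + m))
        (concatP (2 * n + m) (concatP (n + m) (concatP n σ τ) (invP n σ)) (invP m τ)) l ω = 0) ∧
    (∀ ω : Fin (r + s) → V → V → K,
      iint K (2 * (n + m))
        (concatP (2 * n + m) (concatP (n + m) (concatP n σ τ) (invP n σ)) (invP m τ)) (r + s) ω =
        iint K n σ r (fun i => ω (Fin.castAdd s i)) *
            iint K m τ s (fun i => ω (Fin.natAdd r i)) -
          iint K m τ s (fun i => ω (Fin.castLE (by omega) i)) *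
            iint K n σ r (fun i => ω ⟨s + (i : ℕ), by have := i.isLt; omega⟩)) := by
  set Γ := concatP (2 * n + m) (concatP (n + m) (concatP n σ τ) (invP n σ)) (invP m τ)
  have hΓ : ∀ w : ℕ → V → V → K, pathKernel Γ w (2 * (n + m)) = pathKernel σ w n *
      pathKernel τ w m * pathKernel (invP n σ) w n * pathKernel (invP m τ) w m := fun w => by
    rw [show 2 * (n + m) = 2 * n + m + m by ring, pathKernel_concatP,
      show 2 * n + m = n + m + n by ring, pathKernel_concatP, pathKernel_concatP]
  have hσ w := pathKernel_sub_one_mem_gapSubgroup hoσ w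
  have hτ w := pathKernel_sub_one_mem_gapSubgroup hoτ w
  have hcomm w := hΓ w ▸ commutator_sub_one_mem gapSubgroup_antitone mul_mem_gapSubgroup
    (hσ w) (hτ w) (pathKernel_sub_one_mem_gapSubgroup_one _ w n)
    (pathKernel_sub_one_mem_gapSubgroup_one _ w m) (pathKernel_mul_invP σ w n)
    (pathKernel_mul_invP τ w m)
  refine ⟨fun l hl1 hl2 ω => ?_, fun ω => ?_⟩
  · obtain ⟨w, hw⟩ : ∃ w : ℕ → V → V → K, ∀ j : Fin l, ω j = w j :=
      ⟨fun j => if h : j < l then ω ⟨j, h⟩ else 0, fun j => by simp⟩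
    rw [iint_eq_pathKernel_apply Γ w _ 0 fun i => by simp [hw], ← sub_one_apply_of_ne _ (by omega)]
    exact (hcomm w).1 0 (0 + l) (by omega)
  · obtain ⟨w, hw⟩ : ∃ w : ℕ → V → V → K, ∀ j : Fin (r + s), ω j = w j :=
      ⟨fun j => if h : j < r + s then ω ⟨j, h⟩ else 0, fun j => by simp⟩
    have h := apply_add_add_of_sub_commutator_mem (by omega) (by omega) (hσ w) (hτ w) (hcomm w).2 0
    rw [iint_eq_pathKernel_apply Γ w _ 0 fun i => by simp [hw],
      iint_eq_pathKernel_apply σ w _ 0 fun i => by simp [hw],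
      iint_eq_pathKernel_apply τ w _ r fun i => by simp [hw],
      iint_eq_pathKernel_apply τ w _ 0 fun i => by simp [hw],
      iint_eq_pathKernel_apply σ w _ s fun i => by simp [hw]]
    simpa only [zero_add, add_comm s r] using h
end
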